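/- arXiv:math/0701525 — 8 statements merged into one kernel-verified Lean document; each statement's English description precedes it below -/
import Mathlib

section
/- Let G be a locally compact group with a strongly continuous action α of G on a complex Banach space A by linear isometric isomorphisms (so each α_x : A → A is a linear isometry, α_{xy} = α_x ∘ α_y, and x ↦ α_x(a) is continuous for each a ∈ A). Let a ∈ A be a nonzero vector, and for a subset U ⊆ G let F_U(a) denote the linear span of {α_x(a) : x ∈ U}. If there exists a neighborhood U of the identity e of G such that F_U(a) is finite dimensional, then G has an open subgroup H such that F_H(a) is finite dimensional. -/
/-!
Among the neighbourhoods of `1` inside `U`, pick one, `U₀`, for which `F_{U₀}(a)` has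
minimal dimension; then `F_W(a) = F_{U₀}(a)` for every smaller neighbourhood `W`. Choosing
`W` with `W * W ⊆ U₀`, each `α_x` with `x ∈ W` maps `F_{U₀}(a) = F_W(a)` into
`F_{x W}(a) ⊆ F_{U₀}(a)`, hence onto it by finite dimensionality. So the stabilizer of
`F_{U₀}(a)` contains `W`, is an open subgroup, and its orbit of `a` stays inside `F_{U₀}(a)`.
-/

open Filter Topology
open scoped Pointwise

namespace LinearIsometryEquiv

variable (R E : Type*) [Semiring R] [SeminormedAddCommGroup E] [Module R E]

def toLinearEquivHom : (E ≃ₗᵢ[R] E) →* (E ≃ₗ[R] E) where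
  toFun := toLinearEquiv
  map_one' := rfl
  map_mul' _ _ := rfl

end LinearIsometryEquiv

section FiniteDimensional

variable {K V : Type*} [DivisionRing K] [AddCommGroup V] [Module K V]

theorem Submodule.map_eq_of_map_le {p : Submodule K V} [FiniteDimensional K p]
    (e : V ≃ₗ[K] V) (h : p.map (e : V →ₗ[K] V) ≤ p) : p.map (e : V →ₗ[K] V) = p :=
  Submodule.eq_of_le_of_finrank_eq h (e.finrank_map_eq p)

theorem Filter.exists_mem_forall_subset_eq_of_finiteDimensional {α : Type*} {l : Filter α}
    {f : Set α → Submodule K V} (hf : Monotone f) {s : Set α} (hs : s ∈ l)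
    [FiniteDimensional K (f s)] :
    ∃ t ∈ l, t ⊆ s ∧ ∀ u ∈ l, u ⊆ t → f u = f t := by
  classical
  have hdim : ∃ n, ∃ t ∈ l, t ⊆ s ∧ Module.finrank K (f t) = n := ⟨_, s, hs, subset_rfl, rfl⟩
  obtain ⟨t, ht, hts, hmin⟩ := Nat.find_spec hdim
  refine ⟨t, ht, hts, fun u hu hut => ?_⟩
  have : FiniteDimensional K (f t) := Submodule.finiteDimensional_of_le (hf hts)
  exact Submodule.eq_of_le_of_finrank_le (hf hut)
    (hmin ▸ Nat.find_min' hdim ⟨u, hu, hut.trans hts, rfl⟩)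

end FiniteDimensional

section OrbitSpan

variable {K M G : Type*} [DivisionRing K] [AddCommGroup M] [Module K M] [Group G]
  (ρ : G →* (M ≃ₗ[K] M)) (a : M)

def orbitSpan (U : Set G) : Submodule K M :=
  Submodule.span K ((fun x => ρ x a) '' U)

def stabilizer (p : Submodule K M) : Subgroup G :=
  (MulAction.stabilizer (M ≃ₗ[K] M) p).comap ρ

variable {ρ a}

theorem mem_stabilizer_iff {p : Submodule K M} {x : G} :
    x ∈ stabilizer ρ p ↔ p.map (ρ x : M →ₗ[K] M) = p :=
  Iff.rfl

theorem orbitSpan_mono : Monotone (orbitSpan ρ a) :=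
  fun _ _ h => Submodule.span_mono (Set.image_mono h)

theorem mem_orbitSpan {U : Set G} {x : G} (hx : x ∈ U) : ρ x a ∈ orbitSpan ρ a U :=
  Submodule.subset_span ⟨x, hx, rfl⟩

theorem map_orbitSpan (x : G) (U : Set G) :
    (orbitSpan ρ a U).map (ρ x : M →ₗ[K] M) = orbitSpan ρ a (x • U) := by
  simp only [orbitSpan, Submodule.map_span, Set.image_image, ← Set.image_smul, smul_eq_mul,
    map_mul]
  rfl

theorem mem_stabilizer_orbitSpan {U W : Set G} [FiniteDimensional K (orbitSpan ρ a U)]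
    (hW : orbitSpan ρ a W = orbitSpan ρ a U) {x : G} (hx : x • W ⊆ U) :
    x ∈ stabilizer ρ (orbitSpan ρ a U) := by
  refine mem_stabilizer_iff.2 (Submodule.map_eq_of_map_le _ ?_)
  rw [← hW, map_orbitSpan, hW]
  exact orbitSpan_mono hx

theorem orbitSpan_le_of_le_stabilizer {U : Set G} (hU : (1 : G) ∈ U) {H : Subgroup G}
    (hH : H ≤ stabilizer ρ (orbitSpan ρ a U)) : orbitSpan ρ a H ≤ orbitSpan ρ a U := by
  refine Submodule.span_le.2 ?_
  rintro _ ⟨x, hx, rfl⟩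
  rw [← mem_stabilizer_iff.1 (hH hx)]
  exact Submodule.mem_map_of_mem (by simpa using mem_orbitSpan (ρ := ρ) (a := a) hU)

theorem exists_isOpen_subgroup_finiteDimensional_orbitSpan [TopologicalSpace G]
    [ContinuousMul G] {U : Set G} (hU : U ∈ 𝓝 (1 : G))
    (hfin : FiniteDimensional K (orbitSpan ρ a U)) :
    ∃ H : Subgroup G, IsOpen (H : Set G) ∧ FiniteDimensional K (orbitSpan ρ a H) := by
  obtain ⟨U₀, hU₀, hU₀U, hstable⟩ := Filter.exists_mem_forall_subset_eq_of_finiteDimensional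
    (f := orbitSpan ρ a) orbitSpan_mono hU
  have : FiniteDimensional K (orbitSpan ρ a U₀) :=
    Submodule.finiteDimensional_of_le (orbitSpan_mono hU₀U)
  obtain ⟨W, hW, hWW⟩ := exists_nhds_one_split hU₀
  have hWU₀ : W ⊆ U₀ := fun w hw => by simpa using hWW 1 (mem_of_mem_nhds hW) w hw
  have hWH : W ⊆ stabilizer ρ (orbitSpan ρ a U₀) := fun x hx =>
    mem_stabilizer_orbitSpan (hstable W hW hWU₀)
      (Set.smul_set_subset_iff.2 fun w hw => hWW x hx w hw)
  refine ⟨_, Subgroup.isOpen_of_mem_nhds _ (mem_of_superset hW hWH), ?_⟩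
  exact Submodule.finiteDimensional_of_le
    (orbitSpan_le_of_le_stabilizer (mem_of_mem_nhds hU₀) le_rfl)

end OrbitSpan

theorem span_orbit_finiteDimensional_of_nhds_general
    {G A : Type*} [Group G] [TopologicalSpace G] [IsTopologicalGroup G]
    [NormedAddCommGroup A] [NormedSpace ℂ A]
    (α : G →* (A ≃ₗᵢ[ℂ] A))
    (a : A) (U : Set G) (hU : U ∈ 𝓝 (1 : G))
    (hfin : FiniteDimensional ℂ (Submodule.span ℂ ((fun x : G => α x a) '' U))) :
    ∃ H : Subgroup G, IsOpen (H : Set G) ∧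
      FiniteDimensional ℂ (Submodule.span ℂ ((fun x : G => α x a) '' (H : Set G))) :=
  exists_isOpen_subgroup_finiteDimensional_orbitSpan
    (ρ := (LinearIsometryEquiv.toLinearEquivHom ℂ A).comp α) hU hfin

/-- If `G` is a locally compact group acting strongly continuously by linear isometric
isomorphisms on a complex Banach space `A`, `a ≠ 0`, and the span of the orbit of `a` over
some neighborhood `U` of the identity is finite dimensional, then `G` has an open subgroup
`H` such that the span of the orbit of `a` over `H` is finite dimensional. -/
theorem span_orbit_finiteDimensional_of_nhds
    {G A : Type*} [Group G] [TopologicalSpace G] [IsTopologicalGroup G]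
    [LocallyCompactSpace G] [T2Space G]
    [NormedAddCommGroup A] [NormedSpace ℂ A] [CompleteSpace A]
    (α : G →* (A ≃ₗᵢ[ℂ] A)) (hα : ∀ a : A, Continuous fun x : G => α x a)
    (a : A) (ha : a ≠ 0) (U : Set G) (hU : U ∈ 𝓝 (1 : G))
    (hfin : FiniteDimensional ℂ (Submodule.span ℂ ((fun x : G => α x a) '' U))) :
    ∃ H : Subgroup G, IsOpen (H : Set G) ∧
      FiniteDimensional ℂ (Submodule.span ℂ ((fun x : G => α x a) '' (H : Set G))) :=
  span_orbit_finiteDimensional_of_nhds_general α a U hU hfin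
end

section
/- Let G be a locally compact group with a strongly continuous action α of G on a complex Banach space A by linear isometric isomorphisms, such that for every a ∈ A and every continuous linear functional φ on A the function x ↦ φ(α_x(a)) belongs to C₀(G). Suppose a, a₁, …, aₙ ∈ A are nonzero elements and g, g₁, …, gₙ : G → ℂ are functions such that g(y)·α_y(a) = Σ_{i=1}^n g_i(y)·a_i for all y ∈ G. Then g has compact support, i.e., there is a compact set K ⊆ G with g(y) = 0 for y ∉ K. -/
/-!
Every orbit point `α y a` with `g y ≠ 0` lies in the finite-dimensional span `V` of the `aᵢ`,
and, `α y` being an isometry, on the sphere of radius `‖a‖`. The set `S = V ∩ sphere 0 ‖a‖` is norm-compact, hence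
weakly compact, and it misses `0`. The `C₀` hypothesis says that `y ↦ α y a` tends weakly to `0`
at infinity, so it eventually leaves the weakly closed set `S`: off some compact `K`, `g y = 0`.
-/

open Filter Topology

theorem IsCompact.eventually_notMem_of_weak_tendsto {𝕜 E ι : Type*} [CommRing 𝕜]
    [TopologicalSpace 𝕜] [T2Space 𝕜] [ContinuousAdd 𝕜] [ContinuousConstSMul 𝕜 𝕜]
    [AddCommGroup E] [Module 𝕜 E] [TopologicalSpace E] [SeparatingDual 𝕜 E]
    {S : Set E} (hS : IsCompact S) {x : E} (hx : x ∉ S) {l : Filter ι} {f : ι → E}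
    (hf : ∀ φ : StrongDual 𝕜 E, Tendsto (fun i => φ (f i)) l (𝓝 (φ x))) :
    ∀ᶠ i in l, f i ∉ S := by
  have hf_weak : Tendsto (fun i => toWeakSpace 𝕜 E (f i)) l (𝓝 (toWeakSpace 𝕜 E x)) :=
    (WeakBilin.tendsto_iff_forall_eval_tendsto _ fun _ _ h =>
      (SeparatingDual.eq_iff_forall_dual_eq (R := 𝕜)).2 (LinearMap.congr_fun h)).2 hf
  have hS_weak : IsClosed (toWeakSpaceCLM 𝕜 E '' S) :=
    (hS.image (toWeakSpaceCLM 𝕜 E).continuous).isClosed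
  have hx_weak : toWeakSpace 𝕜 E x ∉ toWeakSpaceCLM 𝕜 E '' S := by
    rintro ⟨y, hy, hyx⟩
    exact hx ((toWeakSpace 𝕜 E).injective hyx ▸ hy)
  filter_upwards [hf_weak.eventually (hS_weak.isOpen_compl.mem_nhds hx_weak)] with i hi hiS
  exact hi ⟨f i, hiS, rfl⟩

theorem Submodule.isCompact_inter_sphere {𝕜 E : Type*} [NontriviallyNormedField 𝕜]
    [LocallyCompactSpace 𝕜] [NormedAddCommGroup E] [NormedSpace 𝕜 E]
    (V : Submodule 𝕜 E) [FiniteDimensional 𝕜 V] (r : ℝ) :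
    IsCompact ((V : Set E) ∩ Metric.sphere 0 r) := by
  have := FiniteDimensional.proper 𝕜 V
  convert (isCompact_sphere (0 : V) r).image continuous_subtype_val
  ext x
  simp [and_comm]

theorem compact_support_of_orbit_relation_general
    {G A : Type*} [Group G] [TopologicalSpace G]
    [NormedAddCommGroup A] [NormedSpace ℂ A]
    (α : G →* (A ≃ₗᵢ[ℂ] A))
    (hC0 : ∀ (b : A) (φ : A →L[ℂ] ℂ),
      Continuous (fun x : G => φ (α x b)) ∧
        Tendsto (fun x : G => φ (α x b)) (cocompact G) (𝓝 0))
    (n : ℕ) (a : A) (ha : a ≠ 0) (ai : Fin n → A)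
    (g : G → ℂ) (gi : Fin n → G → ℂ)
    (heq : ∀ y : G, g y • (α y a) = ∑ i, gi i y • ai i) :
    ∃ K : Set G, IsCompact K ∧ ∀ y ∉ K, g y = 0 := by
  set V := Submodule.span ℂ (Set.range ai)
  have : FiniteDimensional ℂ V := .span_of_finite ℂ (Set.finite_range ai)
  have hS : IsCompact ((V : Set A) ∩ Metric.sphere 0 ‖a‖) := V.isCompact_inter_sphere ‖a‖
  have h0 : (0 : A) ∉ (V : Set A) ∩ Metric.sphere 0 ‖a‖ := by simpa [eq_comm] using ha
  have hweak (φ : StrongDual ℂ A) :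
      Tendsto (fun y => φ (α y a)) (cocompact G) (𝓝 (φ 0)) := by
    simpa using (hC0 a φ).2
  obtain ⟨K, hK, hKS⟩ := mem_cocompact.1 (hS.eventually_notMem_of_weak_tendsto h0 hweak)
  refine ⟨K, hK, fun y hy => by_contra fun hg => hKS hy ⟨?_, ?_⟩⟩
  · exact (Submodule.smul_mem_iff _ hg).1
      ((Submodule.mem_span_range_iff_exists_fun ℂ).2 ⟨_, (heq y).symm⟩)
  · exact mem_sphere_zero_iff_norm.2 ((α y).norm_map a)

/-- If `G` acts strongly continuously by linear isometric isomorphisms on a complex Banach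
space `A` with all matrix coefficients in `C₀(G)`, `a, aᵢ` are nonzero, and
`g y • α y a = ∑ i, gᵢ y • aᵢ` for all `y`, then `g` has compact support. -/
theorem compact_support_of_orbit_relation
    {G A : Type*} [Group G] [TopologicalSpace G] [IsTopologicalGroup G]
    [LocallyCompactSpace G] [T2Space G]
    [NormedAddCommGroup A] [NormedSpace ℂ A] [CompleteSpace A]
    (α : G →* (A ≃ₗᵢ[ℂ] A)) (hα : ∀ a : A, Continuous fun x : G => α x a)
    (hC0 : ∀ (b : A) (φ : A →L[ℂ] ℂ),
      Continuous (fun x : G => φ (α x b)) ∧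
        Tendsto (fun x : G => φ (α x b)) (cocompact G) (𝓝 0))
    (n : ℕ) (a : A) (ha : a ≠ 0) (ai : Fin n → A) (hai : ∀ i, ai i ≠ 0)
    (g : G → ℂ) (gi : Fin n → G → ℂ)
    (heq : ∀ y : G, g y • (α y a) = ∑ i, gi i y • ai i) :
    ∃ K : Set G, IsCompact K ∧ ∀ y ∉ K, g y = 0 :=
  compact_support_of_orbit_relation_general α hC0 n a ha ai g gi heq
end

section
/- Let G be a locally compact group. Suppose f, g, f₁, …, fₙ, g₁, …, gₙ ∈ C₀(G) are functions with f and g nonzero such that f(xy)·g(y) = Σ_{i=1}^n f_i(x)·g_i(y) for all x, y ∈ G. Then g has compact support, i.e., g ∈ C_c(G). -/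
/-!
The translates `x ↦ f (x * y)` with `g y ≠ 0` all lie in the finite-dimensional space `W`
spanned by the `fᵢ`. A finite-dimensional space of functions admits interpolation on a finite
set `T`: every `u ∈ W` is `u = ∑ₜ u t • cₜ` with fixed `cₜ ∈ W`, which are bounded since the `fᵢ`
are. Evaluating the translate at `x₀ * y⁻¹` gives `‖f x₀‖ ≤ ∑ₜ ‖f (t * y)‖ * ‖cₜ‖_∞`, and the
right-hand side tends to `0` as `y → ∞`. Choosing `f x₀ ≠ 0`, `g` must vanish off a compact set.
-/

open Filter Topology Set Submodule

namespace Submodule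

variable {K X : Type*} [Field K] (W : Submodule K (X → K)) [FiniteDimensional K W]

theorem exists_finset_eq_zero_of_forall_mem_eq_zero :
    ∃ T : Finset X, ∀ u ∈ W, (∀ x ∈ T, u x = 0) → u = 0 := by
  classical
  let V : Finset X → Submodule K W := fun T =>
    ⨅ x ∈ T, LinearMap.ker ((LinearMap.proj x).comp W.subtype)
  have mem_V {T : Finset X} {w : W} : w ∈ V T ↔ ∀ x ∈ T, (w : X → K) x = 0 := by
    simp [V, Submodule.mem_iInf]
  obtain ⟨_, ⟨T, rfl⟩, hmin⟩ := wellFounded_lt.has_min (range V) ⟨_, ∅, rfl⟩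
  refine ⟨T, fun u hu huT => ?_⟩
  by_contra hne
  obtain ⟨x, hx⟩ := Function.ne_iff.mp hne
  refine hmin (V (insert x T)) ⟨_, rfl⟩ (lt_of_le_of_ne ?_ fun h => hx ?_)
  · exact fun w hw => mem_V.mpr fun t ht => mem_V.mp hw t (Finset.mem_insert_of_mem ht)
  · exact mem_V.mp (h ▸ mem_V.mpr huT : (⟨u, hu⟩ : W) ∈ V (insert x T)) x
      (Finset.mem_insert_self x T)

theorem exists_finset_interpolation :
    ∃ (T : Finset X) (c : T → X → K), (∀ t, c t ∈ W) ∧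
      ∀ u ∈ W, ∀ z, u z = ∑ t : T, u t * c t z := by
  obtain ⟨T, hT⟩ := W.exists_finset_eq_zero_of_forall_mem_eq_zero
  let ev : W →ₗ[K] T → K := LinearMap.pi fun t => (LinearMap.proj (t : X)).comp W.subtype
  have hev : LinearMap.ker ev = ⊥ := LinearMap.ker_eq_bot'.mpr fun w hw =>
    Subtype.ext <| hT w w.2 fun x hx => congrFun hw ⟨x, hx⟩
  obtain ⟨L, hL⟩ := ev.exists_leftInverse_of_injective hev
  classical
  refine ⟨T, fun t => L fun s => if t = s then 1 else 0, fun t => (L _).2, fun u hu z => ?_⟩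
  have hLu : (⟨u, hu⟩ : W) = ∑ t : T, ev ⟨u, hu⟩ t • L fun s => if t = s then 1 else 0 :=
    (LinearMap.congr_fun hL ⟨u, hu⟩).symm.trans (L.pi_apply_eq_sum_univ _)
  simpa [ev] using congrFun (congrArg Subtype.val hLu) z

end Submodule

theorem exists_norm_le_of_mem_span_range {X ι 𝕜 E : Type*} [Fintype ι] [NormedField 𝕜]
    [SeminormedAddCommGroup E] [NormedSpace 𝕜 E] {v : ι → X → E}
    (hv : ∀ i, ∃ M, ∀ x, ‖v i x‖ ≤ M) {u : X → E} (hu : u ∈ span 𝕜 (range v)) :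
    ∃ M, ∀ x, ‖u x‖ ≤ M := by
  obtain ⟨a, rfl⟩ := (mem_span_range_iff_exists_fun 𝕜).mp hu
  choose M hM using hv
  refine ⟨∑ i, ‖a i‖ * M i, fun x => ?_⟩
  rw [Finset.sum_apply]
  refine (norm_sum_le _ _).trans (Finset.sum_le_sum fun i _ => ?_)
  rw [Pi.smul_apply, norm_smul]
  exact mul_le_mul_of_nonneg_left (hM i x) (norm_nonneg _)

theorem exists_norm_le_of_tendsto_cocompact {X E : Type*} [TopologicalSpace X]
    [SeminormedAddCommGroup E] {φ : X → E} (hc : Continuous φ)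
    (h0 : Tendsto φ (cocompact X) (𝓝 0)) : ∃ M, ∀ x, ‖φ x‖ ≤ M := by
  obtain ⟨M, hM⟩ := isBounded_iff_forall_norm_le.mp
    (ZeroAtInftyContinuousMap.isBounded_range ⟨⟨φ, hc⟩, h0⟩)
  exact ⟨M, fun x => hM _ ⟨x, rfl⟩⟩

theorem mem_span_range_of_mul_eq_sum {X Y K ι : Type*} [Field K] [Fintype ι]
    {F : X → Y → K} {g : Y → K} {fi : ι → X → K} {gi : ι → Y → K}
    (heq : ∀ x y, F x y * g y = ∑ i, fi i x * gi i y) {y : Y} (hy : g y ≠ 0) :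
    (fun x => F x y) ∈ span K (range fi) := by
  refine (mem_span_range_iff_exists_fun K).mpr ⟨fun i => gi i y / g y, funext fun x => ?_⟩
  rw [← mul_div_cancel_right₀ (F x y) hy, heq, Finset.sum_div, Finset.sum_apply]
  exact Finset.sum_congr rfl fun i _ => by rw [Pi.smul_apply, smul_eq_mul]; ring

theorem hasCompactSupport_of_factorization_general
    {G : Type*} [Group G] [TopologicalSpace G] [IsTopologicalGroup G]
    (n : ℕ) (f g : G → ℂ) (fi gi : Fin n → G → ℂ)
    (hf : Continuous f ∧ Tendsto f (cocompact G) (𝓝 0)) (hf0 : f ≠ 0)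
    (hfi : ∀ i, Continuous (fi i) ∧ Tendsto (fi i) (cocompact G) (𝓝 0))
    (heq : ∀ x y : G, f (x * y) * g y = ∑ i, fi i x * gi i y) :
    HasCompactSupport g := by
  have : FiniteDimensional ℂ (span ℂ (range fi)) :=
    FiniteDimensional.span_of_finite ℂ (finite_range fi)
  obtain ⟨T, c, hcW, hc⟩ := (span ℂ (range fi)).exists_finset_interpolation
  choose M hM using fun t => exists_norm_le_of_mem_span_range
    (fun i => exists_norm_le_of_tendsto_cocompact (hfi i).1 (hfi i).2) (hcW t)
  obtain ⟨x₀, hx₀⟩ := Function.ne_iff.mp hf0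
  have hbound : ∀ y, g y ≠ 0 → ‖f x₀‖ ≤ ∑ t : T, ‖f (t * y)‖ * M t := fun y hy =>
    calc ‖f x₀‖ = ‖∑ t : T, f (t * y) * c t (x₀ * y⁻¹)‖ := by
          rw [← hc _ (mem_span_range_of_mul_eq_sum heq hy), inv_mul_cancel_right]
      _ ≤ ∑ t : T, ‖f (t * y)‖ * M t := (norm_sum_le _ _).trans <| Finset.sum_le_sum fun t _ => by
          rw [norm_mul]
          exact mul_le_mul_of_nonneg_left (hM t _) (norm_nonneg _)
  have hsmall : Tendsto (fun y => ∑ t : T, ‖f (t * y)‖ * M t) (cocompact G) (𝓝 0) := by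
    simpa using tendsto_finsetSum _ fun (t : T) _ =>
      (hf.2.comp (tendsto_cocompact_mul_left (inv_mul_cancel (t : G)))).norm.mul_const (M t)
  rw [hasCompactSupport_iff_eventuallyEq, coclosedCompact_eq_cocompact]
  filter_upwards [hsmall.eventually (gt_mem_nhds (norm_pos_iff.mpr hx₀))] with y hy
  by_contra hy0
  exact (hbound y hy0).not_gt hy

/-- If `f, g, fᵢ, gᵢ ∈ C₀(G)` with `f, g` nonzero satisfy
`f (x * y) * g y = ∑ i, fᵢ x * gᵢ y` for all `x, y`, then `g` has compact support,
i.e. `g ∈ C_c(G)`. -/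
theorem hasCompactSupport_of_factorization
    {G : Type*} [Group G] [TopologicalSpace G] [IsTopologicalGroup G]
    [LocallyCompactSpace G] [T2Space G]
    (n : ℕ) (f g : G → ℂ) (fi gi : Fin n → G → ℂ)
    (hf : Continuous f ∧ Tendsto f (cocompact G) (𝓝 0)) (hf0 : f ≠ 0)
    (hg : Continuous g ∧ Tendsto g (cocompact G) (𝓝 0)) (hg0 : g ≠ 0)
    (hfi : ∀ i, Continuous (fi i) ∧ Tendsto (fi i) (cocompact G) (𝓝 0))
    (hgi : ∀ i, Continuous (gi i) ∧ Tendsto (gi i) (cocompact G) (𝓝 0))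
    (heq : ∀ x y : G, f (x * y) * g y = ∑ i, fi i x * gi i y) :
    HasCompactSupport g :=
  hasCompactSupport_of_factorization_general n f g fi gi hf hf0 hfi heq
end

section
/- Let G be a group containing a subgroup H, let A be a complex vector space, and suppose g, g₁, …, gₙ : G → A and f₁, …, fₙ : G → ℂ are functions such that χ_H(xy)·g(y) = Σ_{i=1}^n f_i(x)·g_i(y) for all x, y ∈ G, where χ_H is the indicator function of H. Then g has finite support in G/H: there is a finite set F ⊆ G such that g(y) = 0 whenever y ∉ FH = {zh : z ∈ F, h ∈ H}. -/
/-!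
Write `φ x = (f₁ x, …, fₙ x) ∈ ℂⁿ` and pick representatives `y_q` with `g y_q ≠ 0` of the cosets
`q` meeting the support of `g`. The linear maps `L_q c = ∑ cᵢ • gᵢ y_q` satisfy
`L_q (φ y_p⁻¹) = χ_H (y_p⁻¹ y_q) • g y_q`, which vanishes for `p ≠ q` and not for `p = q`.
So the vectors `φ y_p⁻¹` are linearly independent in `ℂⁿ`, and there are at most `n` such cosets.
-/

open Pointwise

theorem LinearIndependent.of_pairwise_apply_eq_zero {ι R M N : Type*} [Ring R]
    [AddCommGroup M] [Module R M] [AddCommGroup N] [Module R N] [NoZeroSMulDivisors R N]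
    (v : ι → M) (L : ι → M →ₗ[R] N) (h0 : Pairwise fun i j ↦ L i (v j) = 0)
    (hne : ∀ i, L i (v i) ≠ 0) : LinearIndependent R v := by
  refine linearIndependent_iff'.mpr fun s c hrel i hi ↦ ?_
  have hsum : ∑ j ∈ s, c j • L i (v j) = c i • L i (v i) :=
    s.sum_eq_single i (fun j _ hji ↦ by rw [h0 hji.symm, smul_zero]) (absurd hi)
  have hci : c i • L i (v i) = 0 := by
    simp_rw [← hsum, ← map_smul, ← map_sum, hrel, map_zero]
  exact (eq_zero_or_eq_zero_of_smul_eq_zero hci).resolve_right (hne i)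

theorem Subgroup.exists_finset_subset_mul_of_finite_image_mk {G : Type*} [Group G]
    (H : Subgroup G) {s : Set G} (hs : (QuotientGroup.mk '' s : Set (G ⧸ H)).Finite) :
    ∃ F : Finset G, s ⊆ (F : Set G) * (H : Set G) := by
  classical
  refine ⟨hs.toFinset.image Quotient.out, fun y hy ↦ ?_⟩
  rw [← QuotientGroup.preimage_image_mk_eq_mul, Finset.coe_image, Set.image_image]
  simp only [QuotientGroup.out_eq', Set.image_id', Set.Finite.coe_toFinset]
  exact ⟨y, hy, rfl⟩

theorem finite_image_mk_support_of_indicator_relation {G K A : Type*} [Group G] [DivisionRing K]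
    [AddCommGroup A] [Module K A] (H : Subgroup G) [DecidablePred (· ∈ H)] {n : ℕ} (g : G → A)
    (gi : Fin n → G → A) (fi : Fin n → G → K)
    (heq : ∀ x y : G, (if x * y ∈ H then (1 : K) else 0) • g y = ∑ i, fi i x • gi i y) :
    (QuotientGroup.mk '' {y | g y ≠ 0} : Set (G ⧸ H)).Finite := by
  choose y hy_supp hy_mk using fun q : (QuotientGroup.mk '' {y | g y ≠ 0} : Set (G ⧸ H)) ↦ q.2
  have hL : ∀ p q, Fintype.linearCombination K (fun i ↦ gi i (y q)) (fun i ↦ fi i (y p)⁻¹) =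
      (if (y p)⁻¹ * y q ∈ H then (1 : K) else 0) • g (y q) := fun p q ↦ (heq _ _).symm
  have hindep : LinearIndependent K fun p i ↦ fi i (y p)⁻¹ := by
    refine .of_pairwise_apply_eq_zero _ (fun q ↦ Fintype.linearCombination K fun i ↦ gi i (y q))
      (fun q p hqp ↦ ?_) fun q ↦ ?_
    · have hpq : (y p)⁻¹ * y q ∉ H := fun h ↦
        hqp (Subtype.ext ((hy_mk q).symm.trans ((QuotientGroup.eq.mpr h).symm.trans (hy_mk p))))
      simp only [hL, if_neg hpq, zero_smul]
    · rw [hL, inv_mul_cancel, if_pos H.one_mem, one_smul]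
      exact hy_supp q
  exact Set.finite_coe_iff.mp hindep.finite

open scoped Classical in
/-- If `H` is a subgroup of a group `G`, `A` a complex vector space, and
`χ_H (x * y) • g y = ∑ i, fᵢ x • gᵢ y` for all `x, y ∈ G`, then `g` has finite support
in `G/H`: there is a finite set `F` such that `g y = 0` whenever `y ∉ F * H`. -/
theorem finite_support_in_quotient_of_indicator_relation
    {G A : Type*} [Group G] [AddCommGroup A] [Module ℂ A]
    (H : Subgroup G) (n : ℕ) (g : G → A) (gi : Fin n → G → A) (fi : Fin n → G → ℂ)
    (heq : ∀ x y : G,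
      (if x * y ∈ H then (1 : ℂ) else 0) • g y = ∑ i, fi i x • gi i y) :
    ∃ F : Finset G, ∀ y : G, y ∉ (F : Set G) * (H : Set G) → g y = 0 := by
  obtain ⟨F, hF⟩ := H.exists_finset_subset_mul_of_finite_image_mk
    (finite_image_mk_support_of_indicator_relation H g gi fi heq)
  exact ⟨F, fun y hy ↦ by_contra fun hgy ↦ hy (hF hgy)⟩
end

section
/- Let G be a locally compact group and H a compact open subgroup of G (with normalized Haar measure on H). For a function f : G → ℂ the following are equivalent: (i) f lies in the linear span of the functions ₓφ with x ∈ G and φ ∈ P(H), where ₓφ is the function on G equal to φ(x⁻¹y) for y ∈ xH and 0 for y ∉ xH; (ii) there exist finitely many functions f₁, …, fₙ ∈ C_c(G) and continuous functions φ₁, …, φₙ : H → ℂ such that f(xh) = Σ_{i=1}^n f_i(x)·φ_i(h) for all x ∈ G and h ∈ H. -/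
/-!
Condition (ii) cuts out a submodule of `G → ℂ`. It contains each generator `ₓφ`: if
`φ (h * k) = ∑ uᵢ h * vᵢ k`, then `ₓφ (y * k) = ∑ ₓuᵢ y * vᵢ k`, and `ₓuᵢ` is continuous with
compact support because `H` is open and compact. Conversely, setting `h = 1` in (ii) shows that
`f` is continuous with compact support. Since `G ⧸ H` is discrete, the support of `f` meets only
finitely many cosets `xH`, so `f = ∑ ₓ(f (x * ·))`, and each `f (x * ·)` is polynomial on `H`
because `f (x * h * k) = ∑ fᵢ (x * h) * φᵢ k`.
-/

open Filter Topology

/-- A function `φ` on a (compact) topological group `H` is *polynomial* if it is continuous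
and there are finitely many continuous functions `uᵢ, vᵢ` with
`φ (h * k) = ∑ i, uᵢ h * vᵢ k` for all `h, k`. -/
def IsPolynomialFun {H : Type*} [Group H] [TopologicalSpace H] (φ : H → ℂ) : Prop :=
  Continuous φ ∧ ∃ (n : ℕ) (u v : Fin n → H → ℂ),
    (∀ i, Continuous (u i)) ∧ (∀ i, Continuous (v i)) ∧
    ∀ h k : H, φ (h * k) = ∑ i, u i h * v i k

open scoped Classical in
/-- For a subgroup `H` of `G`, `x ∈ G` and `φ : H → ℂ`, the function `ₓφ` on `G` supported
on the coset `xH`, equal to `y ↦ φ (x⁻¹ * y)` on `xH` and `0` elsewhere. -/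
noncomputable def cosetExt {G : Type*} [Group G] (H : Subgroup G) (x : G) (φ : ↥H → ℂ) :
    G → ℂ :=
  fun y => if h : x⁻¹ * y ∈ H then φ ⟨x⁻¹ * y, h⟩ else 0

section CosetExt

variable {G : Type*} [Group G] (H : Subgroup G)

lemma cosetExt_eq_comp (x : G) (u : ↥H → ℂ) :
    cosetExt H x u = cosetExt H 1 u ∘ (x⁻¹ * ·) := by
  funext y
  by_cases hy : x⁻¹ * y ∈ H <;> simp [cosetExt, hy]

lemma cosetExt_mul_apply (x y : G) (k : ↥H) (u : ↥H → ℂ) :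
    cosetExt H x u (y * k) = cosetExt H x (fun h => u (h * k)) y := by
  by_cases hy : x⁻¹ * y ∈ H
  · have hyk : x⁻¹ * (y * k) ∈ H := by simpa [mul_assoc] using H.mul_mem hy k.2
    simp only [cosetExt, dif_pos hy, dif_pos hyk]
    congr 1
    ext
    simp [mul_assoc]
  · have hyk : x⁻¹ * (y * k) ∉ H := by
      rwa [← mul_assoc, mul_mem_cancel_right k.2]
    simp only [cosetExt, dif_neg hy, dif_neg hyk]

lemma cosetExt_sum_mul {n : ℕ} (x : G) (u : Fin n → ↥H → ℂ) (c : Fin n → ℂ) :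
    cosetExt H x (fun h => ∑ i, u i h * c i) = ∑ i, cosetExt H x (u i) * fun _ => c i := by
  funext y
  by_cases hy : x⁻¹ * y ∈ H <;> simp [cosetExt, hy]

lemma cosetExt_restrict_eq_indicator (x : G) (f : G → ℂ) :
    cosetExt H x (fun h => f (x * h)) = {y : G | (y : G ⧸ H) = x}.indicator f := by
  funext y
  by_cases hy : x⁻¹ * y ∈ H
  · simp [cosetExt, hy, Set.indicator, QuotientGroup.eq.mpr hy]
  · simp [cosetExt, hy, Set.indicator, eq_comm (a := (y : G ⧸ H)), QuotientGroup.eq]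

lemma sum_cosetExt_out_eq {f : G → ℂ} {T : Finset (G ⧸ H)}
    (hT : ∀ y : G, (y : G ⧸ H) ∉ T → f y = 0) :
    ∑ c ∈ T, cosetExt H c.out (fun h => f (c.out * h)) = f := by
  classical
  funext y
  simp only [Finset.sum_apply, cosetExt_restrict_eq_indicator, Quotient.out_eq,
    Set.indicator_apply, Set.mem_ofPred_eq, Finset.sum_ite_eq, ite_eq_left_iff]
  exact fun hy => (hT y hy).symm

end CosetExt

section Topology

variable {G : Type*} [Group G] [TopologicalSpace G] [SeparatelyContinuousMul G] {H : Subgroup G}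

lemma continuous_cosetExt_one (hHo : IsOpen (H : Set G)) {u : ↥H → ℂ} (hu : Continuous u) :
    Continuous (cosetExt H 1 u) := by
  have hHc : IsClosed (H : Set G) := H.isClosed_of_isOpen hHo
  rw [← continuousOn_univ, ← Set.union_compl_self (H : Set G),
    continuousOn_union_iff_of_isOpen hHo hHc.isOpen_compl]
  refine ⟨?_, continuousOn_const.congr fun y hy => dif_neg (by simpa using hy)⟩
  rw [continuousOn_iff_continuous_domRestrict]
  refine hu.congr fun ⟨y, hy⟩ => ?_
  simp [cosetExt, hy]

lemma continuous_cosetExt (hHo : IsOpen (H : Set G)) (x : G) {u : ↥H → ℂ} (hu : Continuous u) :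
    Continuous (cosetExt H x u) := by
  rw [cosetExt_eq_comp]
  exact (continuous_cosetExt_one hHo hu).comp (Homeomorph.mulLeft x⁻¹).continuous

lemma hasCompactSupport_cosetExt (hHc : IsCompact (H : Set G)) (hHo : IsOpen (H : Set G))
    (x : G) (u : ↥H → ℂ) : HasCompactSupport (cosetExt H x u) := by
  have hH1 : HasCompactSupport (cosetExt H 1 u) :=
    .intro' hHc (H.isClosed_of_isOpen hHo) fun y hy => dif_neg (by simpa using hy)
  rw [cosetExt_eq_comp]
  exact hH1.comp_homeomorph (Homeomorph.mulLeft x⁻¹)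

lemma finite_image_mk_of_isCompact (hHo : IsOpen (H : Set G)) {K : Set G} (hK : IsCompact K) :
    ((↑) '' K : Set (G ⧸ H)).Finite :=
  have := QuotientGroup.discreteTopology hHo
  (hK.image continuous_quotient_mk').finite_of_discrete

end Topology

section SeparatedFunctions

variable {G : Type*} [Group G] [TopologicalSpace G] (H : Subgroup G)

def separatedFunctions : Submodule ℂ (G → ℂ) where
  carrier := {f | ∃ (n : ℕ) (fi : Fin n → G → ℂ) (φi : Fin n → ↥H → ℂ),
    (∀ i, Continuous (fi i) ∧ HasCompactSupport (fi i)) ∧ (∀ i, Continuous (φi i)) ∧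
    ∀ (x : G) (h : ↥H), f (x * (h : G)) = ∑ i, fi i x * φi i h}
  zero_mem' := ⟨0, ![], ![], finZeroElim, finZeroElim, by simp⟩
  add_mem' := by
    rintro f g ⟨n, fi, φi, hfi, hφi, hf⟩ ⟨m, gi, ψi, hgi, hψi, hg⟩
    refine ⟨n + m, Fin.append fi gi, Fin.append φi ψi, Fin.addCases ?_ ?_, Fin.addCases ?_ ?_,
      fun x h => ?_⟩
    all_goals simp_all [Fin.sum_univ_add]
  smul_mem' := by
    rintro c f ⟨n, fi, φi, hfi, hφi, hf⟩
    refine ⟨n, fun i => c • fi i, φi, fun i => ⟨(hfi i).1.const_smul c, (hfi i).2.smul_left⟩,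
      hφi, fun x h => ?_⟩
    simp [hf, Finset.mul_sum, mul_assoc]

variable {H}

lemma exists_eq_sum_mul_const_of_mem_separatedFunctions {f : G → ℂ}
    (hf : f ∈ separatedFunctions H) :
    ∃ (n : ℕ) (fi : Fin n → G → ℂ) (c : Fin n → ℂ),
      (∀ i, Continuous (fi i) ∧ HasCompactSupport (fi i)) ∧ f = ∑ i, fi i * fun _ => c i := by
  obtain ⟨n, fi, φi, hfi, -, hf⟩ := hf
  refine ⟨n, fi, fun i => φi i 1, hfi, funext fun y => ?_⟩
  simpa using hf y 1

lemma continuous_of_mem_separatedFunctions {f : G → ℂ} (hf : f ∈ separatedFunctions H) :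
    Continuous f := by
  obtain ⟨n, fi, c, hfi, rfl⟩ := exists_eq_sum_mul_const_of_mem_separatedFunctions hf
  rw [Finset.sum_fn]
  exact continuous_finsetSum _ fun i _ => (hfi i).1.mul continuous_const

lemma hasCompactSupport_of_mem_separatedFunctions {f : G → ℂ} (hf : f ∈ separatedFunctions H) :
    HasCompactSupport f := by
  obtain ⟨n, fi, c, hfi, rfl⟩ := exists_eq_sum_mul_const_of_mem_separatedFunctions hf
  exact .finset_sum fun i _ => (hfi i).2.mul_right

lemma isPolynomialFun_of_mem_separatedFunctions [SeparatelyContinuousMul G] {f : G → ℂ}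
    (hf : f ∈ separatedFunctions H) (x : G) : IsPolynomialFun fun h : ↥H => f (x * h) := by
  have hx : Continuous fun h : ↥H => x * h := (continuous_const_mul x).comp continuous_subtype_val
  have hfc := continuous_of_mem_separatedFunctions hf
  obtain ⟨n, fi, φi, hfi, hφi, hfe⟩ := hf
  refine ⟨hfc.comp hx, n,
    fun i h => fi i (x * h), φi, fun i => (hfi i).1.comp hx, hφi, fun h k => ?_⟩
  simpa [mul_assoc] using hfe (x * h) k

lemma cosetExt_mem_separatedFunctions [SeparatelyContinuousMul G] (hHc : IsCompact (H : Set G))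
    (hHo : IsOpen (H : Set G)) (x : G) {φ : ↥H → ℂ} (hφ : IsPolynomialFun φ) :
    cosetExt H x φ ∈ separatedFunctions H := by
  obtain ⟨-, n, u, v, hu, hv, huv⟩ := hφ
  refine ⟨n, fun i => cosetExt H x (u i), v,
    fun i => ⟨continuous_cosetExt hHo x (hu i), hasCompactSupport_cosetExt hHc hHo x (u i)⟩, hv,
    fun y k => ?_⟩
  simp only [cosetExt_mul_apply, huv, cosetExt_sum_mul, Finset.sum_apply, Pi.mul_apply]

end SeparatedFunctions

theorem mem_span_cosetExt_iff_general
    {G : Type*} [Group G] [TopologicalSpace G] [IsTopologicalGroup G]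
    (H : Subgroup G) (hHc : IsCompact (H : Set G)) (hHo : IsOpen (H : Set G))
    (f : G → ℂ) :
    f ∈ Submodule.span ℂ
        {ψ : G → ℂ | ∃ (x : G) (φ : ↥H → ℂ), IsPolynomialFun φ ∧ ψ = cosetExt H x φ} ↔
      ∃ (n : ℕ) (fi : Fin n → G → ℂ) (φi : Fin n → ↥H → ℂ),
        (∀ i, Continuous (fi i) ∧ HasCompactSupport (fi i)) ∧
        (∀ i, Continuous (φi i)) ∧
        ∀ (x : G) (h : ↥H), f (x * (h : G)) = ∑ i, fi i x * φi i h := by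
  change _ ↔ f ∈ separatedFunctions H
  refine ⟨fun hf => Submodule.span_le.mpr ?_ hf, fun hf => ?_⟩
  · rintro _ ⟨x, φ, hφ, rfl⟩
    exact cosetExt_mem_separatedFunctions hHc hHo x hφ
  · have hT := finite_image_mk_of_isCompact hHo (hasCompactSupport_of_mem_separatedFunctions hf)
    rw [← sum_cosetExt_out_eq H (f := f) (T := hT.toFinset) fun y hy =>
      image_eq_zero_of_notMem_tsupport fun hy' => hy (hT.mem_toFinset.mpr ⟨y, hy', rfl⟩)]
    exact Submodule.sum_mem _ fun c _ => Submodule.subset_span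
      ⟨c.out, _, isPolynomialFun_of_mem_separatedFunctions hf c.out, rfl⟩

/-- For `H` a compact open subgroup of a locally compact group `G`, a function
`f : G → ℂ` belongs to the span of the translates `ₓφ` (`x ∈ G`, `φ ∈ P(H)`) if and only
if there are finitely many `fᵢ ∈ C_c(G)` and continuous `φᵢ : H → ℂ` with
`f (x * h) = ∑ i, fᵢ x * φᵢ h` for all `x ∈ G`, `h ∈ H`. -/
theorem mem_span_cosetExt_iff
    {G : Type*} [Group G] [TopologicalSpace G] [IsTopologicalGroup G]
    [LocallyCompactSpace G] [T2Space G]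
    (H : Subgroup G) (hHc : IsCompact (H : Set G)) (hHo : IsOpen (H : Set G))
    (f : G → ℂ) :
    f ∈ Submodule.span ℂ
        {ψ : G → ℂ | ∃ (x : G) (φ : ↥H → ℂ), IsPolynomialFun φ ∧ ψ = cosetExt H x φ} ↔
      ∃ (n : ℕ) (fi : Fin n → G → ℂ) (φi : Fin n → ↥H → ℂ),
        (∀ i, Continuous (fi i) ∧ HasCompactSupport (fi i)) ∧
        (∀ i, Continuous (φi i)) ∧
        ∀ (x : G) (h : ↥H), f (x * (h : G)) = ∑ i, fi i x * φi i h :=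
  mem_span_cosetExt_iff_general H hHc hHo f
end

section
/- Let G be a locally compact group and let H and K be two compact open subgroups of G. Then a function f : G → ℂ admits finitely many f₁, …, fₙ ∈ C_c(G) and continuous φ₁, …, φₙ : H → ℂ with f(xh) = Σ_{i=1}^n f_i(x)·φ_i(h) for all x ∈ G, h ∈ H, if and only if it admits finitely many f'₁, …, f'ₘ ∈ C_c(G) and continuous ψ₁, …, ψₘ : K → ℂ with f(xk) = Σ_{j=1}^m f'_j(x)·ψ_j(k) for all x ∈ G, k ∈ K. -/
/-!
A compact group `K` is covered by finitely many cosets `r (L ⊓ K)` of its open subgroup `L ⊓ K`.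
For `k = r l` with `l ∈ L` we have `f (x * k) = ∑ i, fᵢ (x * r) * φᵢ l`, so the right translates
`x ↦ fᵢ (x * r)`, paired with `k ↦ φᵢ (r⁻¹ * k)` extended by zero off the clopen coset `r L`,
factor `f` over `K`.
-/

/-- The factorization property of a function `f : G → ℂ` relative to a (compact open)
subgroup `H`: there are finitely many `fᵢ ∈ C_c(G)` and continuous `φᵢ : H → ℂ` with
`f (x * h) = ∑ i, fᵢ x * φᵢ h` for all `x ∈ G`, `h ∈ H`. -/
def PolyPropWrt {G : Type*} [Group G] [TopologicalSpace G] (H : Subgroup G)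
    (f : G → ℂ) : Prop :=
  ∃ (n : ℕ) (fi : Fin n → G → ℂ) (φ : Fin n → ↥H → ℂ),
    (∀ i, Continuous (fi i) ∧ HasCompactSupport (fi i)) ∧
    (∀ i, Continuous (φ i)) ∧
    ∀ (x : G) (h : ↥H), f (x * (h : G)) = ∑ i, fi i x * φ i h

open Function

lemma IsClopen.continuous_extend_val_zero {X β : Type*} [TopologicalSpace X]
    [TopologicalSpace β] [Zero β] {U : Set X} (hU : IsClopen U) {φ : U → β}
    (hφ : Continuous φ) : Continuous (Subtype.val.extend φ 0) := by
  have hsupp : support (Subtype.val.extend φ 0) ⊆ U := by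
    intro x hx
    by_contra hxU
    exact hx (extend_apply' _ _ _ fun ⟨y, hy⟩ => hxU (hy ▸ y.2))
  have hcont : ContinuousOn (Subtype.val.extend φ 0) U := by
    rw [continuousOn_iff_continuous_domRestrict]
    convert hφ
    ext x
    exact Subtype.val_injective.extend_apply φ 0 x
  have hfrontier : ∀ x ∈ frontier U, Subtype.val.extend φ 0 x = 0 := by
    simp [isClopen_iff_frontier_eq_empty.mp hU]
  rw [← Set.indicator_eq_self.mpr hsupp]
  exact _root_.continuous_indicator hfrontier (hU.isClosed.closure_eq.symm ▸ hcont)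

namespace PolyPropWrt

variable {G : Type*} [Group G] [TopologicalSpace G] {f : G → ℂ}

lemma of_fintype {H : Subgroup G} {ι : Type*} [Fintype ι] (fi : ι → G → ℂ) (φ : ι → H → ℂ)
    (hfi : ∀ i, Continuous (fi i) ∧ HasCompactSupport (fi i)) (hφ : ∀ i, Continuous (φ i))
    (hsum : ∀ (x : G) (h : H), f (x * h) = ∑ i, fi i x * φ i h) : PolyPropWrt H f := by
  let e := Fintype.equivFin ι
  refine ⟨Fintype.card ι, fi ∘ e.symm, φ ∘ e.symm, fun i => hfi _, fun i => hφ _, ?_⟩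
  intro x h
  rw [hsum, ← e.symm.sum_comp]
  rfl

lemma of_isOpen_of_isCompact [IsTopologicalGroup G] {L K : Subgroup G} (hf : PolyPropWrt L f)
    (hLo : IsOpen (L : Set G)) (hKc : IsCompact (K : Set G)) : PolyPropWrt K f := by
  obtain ⟨n, fi, φ, hfi, hφ, hsum⟩ := hf
  have : CompactSpace K := isCompact_iff_compactSpace.mp hKc
  set M : Subgroup K := L.subgroupOf K
  have : Finite (K ⧸ M) := M.quotient_finite_of_isOpen (K.subgroupOf_isOpen L hLo)
  have := Fintype.ofFinite (K ⧸ M)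
  set Φ : Fin n → G → ℂ := fun i => Subtype.val.extend (φ i) 0
  set r : K ⧸ M → K := Quotient.out
  have hΦ_of_mem (i : Fin n) {g : G} (hg : g ∈ L) : Φ i g = φ i ⟨g, hg⟩ :=
    Subtype.val_injective.extend_apply (φ i) 0 ⟨g, hg⟩
  have hΦ_of_ne (i : Fin n) (k : K) (c : K ⧸ M) (hc : c ≠ k) : Φ i ((r c)⁻¹ * k : K) = 0 := by
    refine extend_apply' _ _ _ fun ⟨l, hl⟩ => hc ?_
    have hmem : (r c)⁻¹ * k ∈ M := Subgroup.mem_subgroupOf.mpr (hl ▸ l.2)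
    rw [← QuotientGroup.eq.mpr hmem, QuotientGroup.out_eq']
  refine of_fintype (ι := Fin n × (K ⧸ M)) (fun p x => fi p.1 (x * r p.2))
    (fun p k => Φ p.1 ((r p.2)⁻¹ * k : K)) (fun p => ⟨?_, ?_⟩) (fun p => ?_) (fun x k => ?_)
  · exact (hfi p.1).1.comp (continuous_mul_const _)
  · exact (hfi p.1).2.comp_homeomorph (Homeomorph.mulRight _)
  · exact (IsClopen.continuous_extend_val_zero ⟨L.isClosed_of_isOpen hLo, hLo⟩ (hφ p.1)).comp
      (continuous_subtype_val.comp (continuous_const.mul continuous_id))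
  · have hmem : (((r k)⁻¹ * k : K) : G) ∈ L :=
      Subgroup.mem_subgroupOf.mp (QuotientGroup.eq.mp (QuotientGroup.out_eq' _))
    have hxk : x * k = x * r k * ((r k)⁻¹ * k : K) := by push_cast; group
    rw [Fintype.sum_prod_type_right, Finset.sum_eq_single (k : K ⧸ M), hxk]
    · exact (hsum _ ⟨_, hmem⟩).trans (Finset.sum_congr rfl fun i _ => by rw [hΦ_of_mem i hmem])
    · exact fun c _ hc => Finset.sum_eq_zero fun i _ => by rw [hΦ_of_ne i k c hc, mul_zero]
    · exact fun h => absurd (Finset.mem_univ _) h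

end PolyPropWrt

theorem polyPropWrt_iff_polyPropWrt_general
    {G : Type*} [Group G] [TopologicalSpace G] [IsTopologicalGroup G]
    (H K : Subgroup G)
    (hHc : IsCompact (H : Set G)) (hHo : IsOpen (H : Set G))
    (hKc : IsCompact (K : Set G)) (hKo : IsOpen (K : Set G))
    (f : G → ℂ) :
    PolyPropWrt H f ↔ PolyPropWrt K f := by
  exact ⟨fun h => h.of_isOpen_of_isCompact hHo hKc, fun h => h.of_isOpen_of_isCompact hKo hHc⟩

/-- The factorization property is independent of the choice of compact open subgroup. -/
theorem polyPropWrt_iff_polyPropWrt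
    {G : Type*} [Group G] [TopologicalSpace G] [IsTopologicalGroup G]
    [LocallyCompactSpace G] [T2Space G]
    (H K : Subgroup G)
    (hHc : IsCompact (H : Set G)) (hHo : IsOpen (H : Set G))
    (hKc : IsCompact (K : Set G)) (hKo : IsOpen (K : Set G))
    (f : G → ℂ) :
    PolyPropWrt H f ↔ PolyPropWrt K f :=
  polyPropWrt_iff_polyPropWrt_general H K hHc hHo hKc hKo f
end

section
/- Let G be a locally compact group possessing a compact open subgroup. A function f : G → ℂ belongs to P(G) if and only if f ∈ C₀(G) and there exist nonzero functions g, h ∈ C₀(G) and finitely many functions f₁, …, fₘ, g₁, …, gₘ, f'₁, …, f'ₙ, g'₁, …, g'ₙ ∈ C₀(G), all nonzero, such that for all x, y ∈ G: (i) f(xy)·g(y) = Σ_{i=1}^m f_i(x)·g_i(y), and (ii) f(y)·h(xy) = Σ_{j=1}^n f'_j(x)·g'_j(y). -/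
/-!
For `f ∈ P(G)` with compact open subgroup `H`, both identities hold with `g = h = 1_H`: (i) by
extending the `φᵢ` by zero, and (ii) because `supp f` meets only finitely many cosets `cH`, so that
`1_H(xy) = ∑_c 1_H(xc) 1_H(c⁻¹y)` for `y ∈ supp f`.

Conversely, (ii) writes `f(y) h(xy)` through finitely many fixed points `xᵢ` as
`∑ᵢ aᵢ(x) f(y) h(xᵢy)` with bounded coefficients `aᵢ`; taking `x = zy⁻¹` with `h z ≠ 0` shows that
`f y ≠ 0` is impossible once all `h(xᵢy)` are small, so `f` has compact support. By (i), every right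
translate of `f` by a `y` with `g y ≠ 0` lies in `span fᵢ`, and finitely many translates of
`{g ≠ 0}` cover `H`, so the right translates of `f` by `H` span a finite-dimensional space `D`.
Interpolating `D` at finitely many points `z_l` gives `f(xk) = ∑_l b_l(x) f(z_l k)`.
-/

open Filter Topology

/-- The space `P(G)` of polynomial functions on `G`: all continuous compactly supported
`f : G → ℂ` such that for some compact open subgroup `H` of `G` there are finitely many
`fᵢ ∈ C_c(G)` and continuous `φᵢ : H → ℂ` with `f (x * h) = ∑ i, fᵢ x * φᵢ h` for all
`x ∈ G`, `h ∈ H`. -/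
def PolyFun (G : Type*) [Group G] [TopologicalSpace G] : Set (G → ℂ) :=
  {f | Continuous f ∧ HasCompactSupport f ∧
    ∃ H : Subgroup G, IsCompact (H : Set G) ∧ IsOpen (H : Set G) ∧
      ∃ (n : ℕ) (fi : Fin n → G → ℂ) (φ : Fin n → ↥H → ℂ),
        (∀ i, Continuous (fi i) ∧ HasCompactSupport (fi i)) ∧
        (∀ i, Continuous (φ i)) ∧
        ∀ (x : G) (h : ↥H), f (x * (h : G)) = ∑ i, fi i x * φ i h}

open Set
open scoped Pointwise

section CompactlySupported

variable {R M X : Type*} [Semiring R] [TopologicalSpace X] [TopologicalSpace M]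
  [AddCommMonoid M] [ContinuousAdd M] [Module R M] [ContinuousConstSMul R M]

variable (R M X) in
def compactlySupportedContinuous : Submodule R (X → M) where
  carrier := {f | Continuous f ∧ HasCompactSupport f}
  add_mem' hf hg := ⟨hf.1.add hg.1, hf.2.add hg.2⟩
  zero_mem' := ⟨continuous_const, HasCompactSupport.zero⟩
  smul_mem' c _ hf := ⟨hf.1.const_smul c, hf.2.smul_left (f := fun _ => c)⟩

theorem comp_homeomorph_mem_compactlySupportedContinuous {Y : Type*} [TopologicalSpace Y]
    {φ : X → M} (hφ : φ ∈ compactlySupportedContinuous R M X) (e : Y ≃ₜ X) :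
    φ ∘ e ∈ compactlySupportedContinuous R M Y :=
  ⟨hφ.1.comp e.continuous, hφ.2.comp_homeomorph e⟩

theorem indicator_one_mem_compactlySupportedContinuous [T2Space X] [One M] {s : Set X}
    (hsc : IsCompact s) (hso : IsOpen s) :
    s.indicator 1 ∈ compactlySupportedContinuous R M X :=
  ⟨IsClopen.continuous_indicator ⟨hsc.isClosed, hso⟩ continuous_const,
    HasCompactSupport.intro hsc fun _ hx => indicator_of_notMem hx _⟩

end CompactlySupported

theorem Finset.exists_fin_sum_mul_eq_of_ne_zero {ι α β R : Type*} [NonUnitalNonAssocSemiring R]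
    (s : Finset ι) (F : ι → α → R) (G : ι → β → R) :
    ∃ (m : ℕ) (e : Fin m → ι), (∀ j, e j ∈ s ∧ F (e j) ≠ 0 ∧ G (e j) ≠ 0) ∧
      ∀ x y, ∑ i ∈ s, F i x * G i y = ∑ j, F (e j) x * G (e j) y := by
  classical
  let t := s.filter fun i => F i ≠ 0 ∧ G i ≠ 0
  refine ⟨t.card, fun j => (t.equivFin.symm j).1, fun j => ?_, fun x y => ?_⟩
  · exact Finset.mem_filter.mp (t.equivFin.symm j).2
  · rw [← Finset.sum_filter_of_ne (p := fun i => F i ≠ 0 ∧ G i ≠ 0), ← Finset.sum_coe_sort]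
    · exact (Equiv.sum_comp t.equivFin.symm fun i : t => F i x * G i y).symm
    · intro i _ hi
      exact ⟨fun hF => hi (by simp [hF]), fun hG => hi (by simp [hG])⟩

theorem Submodule.exists_eval_eq_zero_imp_eq_zero {𝕜 α : Type*} [Field 𝕜]
    (D : Submodule 𝕜 (α → 𝕜)) [FiniteDimensional 𝕜 D] :
    ∃ (k : ℕ) (z : Fin k → α), ∀ v ∈ D, (∀ l, v (z l) = 0) → v = 0 := by
  induction hd : Module.finrank 𝕜 D using Nat.strong_induction_on generalizing D with
  | _ d IH =>
    rcases eq_or_ne D ⊥ with rfl | hD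
    · exact ⟨0, Fin.elim0, fun v hv _ => (Submodule.mem_bot 𝕜).mp hv⟩
    obtain ⟨v₀, hv₀D, hv₀⟩ := D.ne_bot_iff.mp hD
    obtain ⟨a, ha⟩ := Function.ne_iff.mp hv₀
    let D' := D ⊓ LinearMap.ker (LinearMap.proj a)
    have hlt : D' < D := inf_lt_left.mpr fun hle => ha (hle hv₀D)
    obtain ⟨k, z, hz⟩ := IH _ (hd ▸ Submodule.finrank_lt_finrank_of_lt hlt) D' rfl
    exact ⟨k + 1, Fin.cons a z, fun v hv hvz => hz v ⟨hv, hvz 0⟩ fun l => hvz l.succ⟩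

theorem Submodule.exists_eq_sum_eval_smul {𝕜 α : Type*} [Field 𝕜]
    (D : Submodule 𝕜 (α → 𝕜)) [FiniteDimensional 𝕜 D] :
    ∃ (k : ℕ) (z : Fin k → α) (b : Fin k → α → 𝕜),
      (∀ l, b l ∈ D) ∧ ∀ v ∈ D, v = ∑ l, v (z l) • b l := by
  obtain ⟨k, z, hz⟩ := D.exists_eval_eq_zero_imp_eq_zero
  let E : D →ₗ[𝕜] Fin k → 𝕜 := LinearMap.pi fun l => (LinearMap.proj (z l)).comp D.subtype
  have hE : LinearMap.ker E = ⊥ := LinearMap.ker_eq_bot'.mpr fun v hv =>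
    Subtype.ext (hz v v.2 fun l => congrFun hv l)
  obtain ⟨P, hP⟩ := E.exists_leftInverse_of_injective hE
  refine ⟨k, z, fun l => P (Pi.single l 1), fun l => (P _).2, fun v hv => ?_⟩
  have hPE : P (E ⟨v, hv⟩) = ⟨v, hv⟩ := LinearMap.congr_fun hP _
  calc v = (P (E ⟨v, hv⟩) : α → 𝕜) := by rw [hPE]
    _ = ∑ l, v (z l) • (P (Pi.single l 1) : α → 𝕜) := by
      rw [pi_eq_sum_univ' (E ⟨v, hv⟩)]
      simp [E]

theorem exists_bounded_coeffs_of_isBounded_range {𝕜 E α : Type*} [NontriviallyNormedField 𝕜]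
    [CompleteSpace 𝕜] [NormedAddCommGroup E] [NormedSpace 𝕜 E] [FiniteDimensional 𝕜 E]
    {v : α → E} (hv : Bornology.IsBounded (range v)) :
    ∃ (d : ℕ) (xs : Fin d → α) (a : α → Fin d → 𝕜) (C : ℝ),
      (∀ x, ‖a x‖ ≤ C) ∧ ∀ x, v x = ∑ i, a x i • v (xs i) := by
  obtain ⟨M, hM⟩ := isBounded_iff_forall_norm_le.mp hv
  obtain ⟨w, hw, hspan, hli⟩ := Submodule.exists_fun_fin_finrank_span_eq 𝕜 (range v)
  choose xs hxs using hw
  let B := Module.Basis.span hli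
  have hmem : ∀ x, v x ∈ Submodule.span 𝕜 (range w) :=
    fun x => hspan.symm ▸ Submodule.subset_span (mem_range_self x)
  refine ⟨_, xs, fun x => B.equivFunL ⟨v x, hmem x⟩, ‖B.equivFunL.toContinuousLinearMap‖ * M,
    fun x => ?_, fun x => ?_⟩
  · exact (B.equivFunL.toContinuousLinearMap.le_opNorm _).trans
      (mul_le_mul_of_nonneg_left (hM _ (mem_range_self x)) (norm_nonneg _))
  · have := congrArg Subtype.val (B.sum_equivFun ⟨v x, hmem x⟩)
    simpa [B, Module.Basis.span_apply, hxs] using this.symm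

section Group

variable {G : Type*} [Group G] [TopologicalSpace G]

theorem exists_sum_mul_indicator_of_mem_polyFun [T2Space G] {f : G → ℂ} (hf : f ∈ PolyFun G) :
    ∃ H : Subgroup G, IsCompact (H : Set G) ∧ IsOpen (H : Set G) ∧
      ∃ (n : ℕ) (fi gi : Fin n → G → ℂ), (∀ i, fi i ∈ compactlySupportedContinuous ℂ ℂ G) ∧
        (∀ i, gi i ∈ compactlySupportedContinuous ℂ ℂ G) ∧
        ∀ x y, f (x * y) * (H : Set G).indicator 1 y = ∑ i, fi i x * gi i y := by
  obtain ⟨-, -, H, hHc, hHo, n, fi, φ, hfi, hφ, hdec⟩ := hf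
  have : CompactSpace H := isCompact_iff_compactSpace.mp hHc
  have hext_mem : ∀ i y (hy : y ∈ H), Subtype.val.extend (φ i) 0 y = φ i ⟨y, hy⟩ :=
    fun i y hy => Subtype.val_injective.extend_apply (φ i) 0 ⟨y, hy⟩
  have hext_notMem : ∀ i y, y ∉ H → Subtype.val.extend (φ i) 0 y = 0 := fun i y hy =>
    Function.extend_apply' _ _ _ fun ⟨u, hu⟩ => hy (hu ▸ u.2)
  refine ⟨H, hHc, hHo, n, fi, fun i => Subtype.val.extend (φ i) 0, hfi, fun i => ⟨?_, ?_⟩,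
    fun x y => ?_⟩
  · exact HasCompactSupport.continuous_extend_zero hHo (hφ i)
      (isClosed_tsupport _).isCompact
  · exact HasCompactSupport.intro hHc (hext_notMem i)
  · by_cases hy : y ∈ H
    · simp [indicator_of_mem (SetLike.mem_coe.mpr hy), hdec x ⟨y, hy⟩, hext_mem _ y hy]
    · simp [indicator_of_notMem (mt SetLike.mem_coe.mp hy), hext_notMem _ y hy]

variable [IsTopologicalGroup G]

theorem exists_finset_mul_indicator_mul_eq_sum {f : G → ℂ} (hf : HasCompactSupport f)
    {H : Subgroup G} (hH : IsOpen (H : Set G)) :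
    ∃ s : Finset G, ∀ x y, f y * (H : Set G).indicator 1 (x * y) =
      ∑ c ∈ s, (H : Set G).indicator 1 (x * c) * (f y * (H : Set G).indicator 1 (c⁻¹ * y)) := by
  have : DiscreteTopology (G ⧸ H) := QuotientGroup.discreteTopology hH
  have hfin := (hf.isCompact.image (QuotientGroup.continuous_mk (N := H))).finite_of_discrete
  refine ⟨(hfin.image Quotient.out).toFinset, fun x y => ?_⟩
  by_cases hy : f y = 0
  · simp [hy]
  obtain ⟨c, hc⟩ : ∃ c, (y : G ⧸ H).out = c := ⟨_, rfl⟩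
  have hcy : c⁻¹ * y ∈ H := QuotientGroup.eq.mp (hc ▸ QuotientGroup.out_eq' _)
  rw [Finset.sum_eq_single_of_mem c
    ((hfin.image _).mem_toFinset.mpr ⟨_, ⟨y, subset_tsupport f hy, rfl⟩, hc⟩)]
  · have hxc : x * c ∈ (H : Set G) ↔ x * y ∈ (H : Set G) := by
      simpa [mul_assoc] using (H.mul_mem_cancel_right (y := x * c) hcy).symm
    rw [indicator_of_mem (SetLike.mem_coe.mpr hcy), indicator_eq_indicator (g := 1) hxc rfl,
      Pi.one_apply, mul_one, mul_comm]
  · rintro _ hc' hne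
    obtain ⟨_, ⟨y', -, rfl⟩, rfl⟩ := (hfin.image _).mem_toFinset.mp hc'
    suffices (y' : G ⧸ H).out⁻¹ * y ∉ H by simp [this]
    intro h
    apply hne
    rw [← hc, ← QuotientGroup.out_eq' (y' : G ⧸ H), QuotientGroup.eq.mpr h]

theorem hasCompactSupport_of_mul_eq_sum [T2Space G] {n : ℕ} {f h : G → ℂ}
    {fj gj : Fin n → G → ℂ} (hh : Tendsto h (cocompact G) (𝓝 0)) (hh0 : h ≠ 0)
    (hfj : ∀ j, Bornology.IsBounded (range (fj j)))
    (hid : ∀ x y, f y * h (x * y) = ∑ j, fj j x * gj j y) :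
    HasCompactSupport f := by
  obtain ⟨z, hz⟩ := Function.ne_iff.mp hh0
  have hbdd : Bornology.IsBounded (range fun x j => fj j x) :=
    (Bornology.IsBounded.pi hfj).subset <| range_subset_iff.mpr fun x j _ => mem_range_self x
  obtain ⟨d, xs, a, C, ha, hv⟩ := exists_bounded_coeffs_of_isBounded_range (𝕜 := ℂ) hbdd
  have key : ∀ x y, f y * h (x * y) = ∑ i, a x i * (f y * h (xs i * y)) := fun x y => by
    have hfj_eq : ∀ j, fj j x = ∑ i, a x i * fj j (xs i) := fun j => by
      simpa using congrFun (hv x) j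
    simp_rw [hid, hfj_eq, Finset.mul_sum, Finset.sum_mul]
    rw [Finset.sum_comm]
    exact Finset.sum_congr rfl fun i _ => Finset.sum_congr rfl fun j _ => by ring
  -- at `x = z * y⁻¹`, `key` reads `h z = ∑ i, a (z * y⁻¹) i * h (xs i * y)` wherever `f y ≠ 0`
  have hlim : Tendsto (fun y => ∑ i, h (xs i * y) * a (z * y⁻¹) i) (cocompact G) (𝓝 0) := by
    simpa using tendsto_finsetSum Finset.univ fun i _ =>
      (hh.comp (tendsto_cocompact_mul_left (inv_mul_cancel (xs i)))).zero_mul_isBoundedUnder_le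
        (isBoundedUnder_of ⟨C, fun y => (norm_le_pi_norm _ i).trans (ha _)⟩)
  rw [hasCompactSupport_iff_eventuallyEq, coclosedCompact_eq_cocompact]
  filter_upwards [hlim.eventually_ne hz.symm] with y hy
  by_contra hfy
  refine hy (mul_left_cancel₀ hfy ?_)
  rw [Finset.mul_sum]
  simpa [mul_comm, mul_left_comm, mul_assoc] using (key (z * y⁻¹) y).symm

theorem finiteDimensional_span_translates {m : ℕ} {f g : G → ℂ} {fi gi : Fin m → G → ℂ}
    (hg : Continuous g) (hg0 : g ≠ 0) (hid : ∀ x y, f (x * y) * g y = ∑ i, fi i x * gi i y)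
    {K : Set G} (hK : IsCompact K) :
    FiniteDimensional ℂ (Submodule.span ℂ ((fun k x => f (x * k)) '' K)) := by
  obtain ⟨u, hu⟩ := Function.ne_iff.mp hg0
  have hU : IsOpen {y | g y ≠ 0} := isOpen_ne_fun hg continuous_const
  obtain ⟨t, ht⟩ := hK.elim_finite_subcover (fun c : G => c • {y | g y ≠ 0})
    (fun c => hU.smul c) fun k _ => mem_iUnion.mpr ⟨k * u⁻¹, u, hu, by simp⟩
  have htrans : ∀ y, g y ≠ 0 → ∀ x, f (x * y) = ∑ i, (gi i y / g y) * fi i x := by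
    intro y hy x
    rw [← mul_left_inj' hy, hid, Finset.sum_mul]
    exact Finset.sum_congr rfl fun i _ => by field_simp
  let D := Submodule.span ℂ (range fun p : t × Fin m => fun x => fi p.2 (x * p.1))
  have : FiniteDimensional ℂ D := FiniteDimensional.span_of_finite ℂ (finite_range _)
  refine Submodule.finiteDimensional_of_le (Submodule.span_le.mpr ?_ : _ ≤ D)
  rintro _ ⟨k, hk, rfl⟩
  obtain ⟨c, hct, y, hy, rfl⟩ : ∃ c ∈ t, ∃ y, g y ≠ 0 ∧ c * y = k := by
    simpa [mem_smul_set] using ht hk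
  have hcy : (fun x => f (x * (c * y))) = ∑ i, (gi i y / g y) • fun x => fi i (x * c) := by
    ext x
    simp [← mul_assoc, htrans y hy]
  change (fun x => f (x * (c * y))) ∈ D
  rw [hcy]
  exact Submodule.sum_mem _ fun i _ =>
    Submodule.smul_mem _ _ (Submodule.subset_span ⟨(⟨c, hct⟩, i), rfl⟩)

theorem mem_polyFun_of_finiteDimensional_span_translates {f : G → ℂ} (hfc : Continuous f)
    (hfs : HasCompactSupport f) {H : Subgroup G} (hHc : IsCompact (H : Set G))
    (hHo : IsOpen (H : Set G))
    (hD : FiniteDimensional ℂ (Submodule.span ℂ ((fun k x => f (x * k)) '' (H : Set G)))) :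
    f ∈ PolyFun G := by
  obtain ⟨k, z, b, hbD, hb⟩ :=
    (Submodule.span ℂ ((fun k x => f (x * k)) '' (H : Set G))).exists_eq_sum_eval_smul
  have hDcc : Submodule.span ℂ ((fun k x => f (x * k)) '' (H : Set G)) ≤
      compactlySupportedContinuous ℂ ℂ G := by
    rw [Submodule.span_le]
    rintro _ ⟨h, -, rfl⟩
    exact comp_homeomorph_mem_compactlySupportedContinuous ⟨hfc, hfs⟩ (Homeomorph.mulRight h)
  refine ⟨hfc, hfs, H, hHc, hHo, k, b, fun l h => f (z l * h), fun l => hDcc (hbD l),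
    fun l => by fun_prop, fun x h => ?_⟩
  simpa [mul_comm] using congrFun (hb _ (Submodule.subset_span ⟨h, h.2, rfl⟩)) x

end Group

theorem exists_fin_factorization_of_mem_compactlySupportedContinuous {X ι : Type*}
    [TopologicalSpace X] (s : Finset ι) {F G : ι → X → ℂ}
    (hF : ∀ i ∈ s, F i ∈ compactlySupportedContinuous ℂ ℂ X)
    (hG : ∀ i ∈ s, G i ∈ compactlySupportedContinuous ℂ ℂ X) :
    ∃ (m : ℕ) (F' G' : Fin m → X → ℂ),
      (∀ j, Continuous (F' j) ∧ Tendsto (F' j) (cocompact X) (𝓝 0) ∧ F' j ≠ 0) ∧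
      (∀ j, Continuous (G' j) ∧ Tendsto (G' j) (cocompact X) (𝓝 0) ∧ G' j ≠ 0) ∧
      ∀ x y, ∑ i ∈ s, F i x * G i y = ∑ j, F' j x * G' j y := by
  obtain ⟨m, e, he, hsum⟩ := s.exists_fin_sum_mul_eq_of_ne_zero F G
  have hc₀ {φ : X → ℂ} (hφ : φ ∈ compactlySupportedContinuous ℂ ℂ X) (hne : φ ≠ 0) :
      Continuous φ ∧ Tendsto φ (cocompact X) (𝓝 0) ∧ φ ≠ 0 :=
    ⟨hφ.1, hφ.2.is_zero_at_infty, hne⟩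
  exact ⟨m, fun j => F (e j), fun j => G (e j), fun j => hc₀ (hF _ (he j).1) (he j).2.1,
    fun j => hc₀ (hG _ (he j).1) (he j).2.2, hsum⟩

theorem mem_polyFun_iff_factorizations_general
    {G : Type*} [Group G] [TopologicalSpace G] [IsTopologicalGroup G]
    [T2Space G]
    (hG : ∃ H : Subgroup G, IsCompact (H : Set G) ∧ IsOpen (H : Set G))
    (f : G → ℂ) :
    f ∈ PolyFun G ↔
      (Continuous f ∧ Tendsto f (cocompact G) (𝓝 0)) ∧
      ∃ (m n : ℕ) (g h : G → ℂ) (fi gi : Fin m → G → ℂ) (fj gj : Fin n → G → ℂ),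
        (Continuous g ∧ Tendsto g (cocompact G) (𝓝 0) ∧ g ≠ 0) ∧
        (Continuous h ∧ Tendsto h (cocompact G) (𝓝 0) ∧ h ≠ 0) ∧
        (∀ i, Continuous (fi i) ∧ Tendsto (fi i) (cocompact G) (𝓝 0) ∧ fi i ≠ 0) ∧
        (∀ i, Continuous (gi i) ∧ Tendsto (gi i) (cocompact G) (𝓝 0) ∧ gi i ≠ 0) ∧
        (∀ j, Continuous (fj j) ∧ Tendsto (fj j) (cocompact G) (𝓝 0) ∧ fj j ≠ 0) ∧
        (∀ j, Continuous (gj j) ∧ Tendsto (gj j) (cocompact G) (𝓝 0) ∧ gj j ≠ 0) ∧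
        (∀ x y : G, f (x * y) * g y = ∑ i, fi i x * gi i y) ∧
        (∀ x y : G, f y * h (x * y) = ∑ j, fj j x * gj j y) := by
  constructor
  · intro hf
    obtain ⟨H, hHc, hHo, n, fi, gi, hfi, hgi, hid₁⟩ := exists_sum_mul_indicator_of_mem_polyFun hf
    obtain ⟨s, hid₂⟩ := exists_finset_mul_indicator_mul_eq_sum hf.2.1 hHo
    have hind : (H : Set G).indicator 1 ∈ compactlySupportedContinuous ℂ ℂ G :=
      indicator_one_mem_compactlySupportedContinuous hHc hHo
    have hind₀ : (H : Set G).indicator (1 : G → ℂ) ≠ 0 := fun h0 => by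
      simpa using congrFun h0 1
    obtain ⟨m, F₁, G₁, hF₁, hG₁, hsum₁⟩ :=
      exists_fin_factorization_of_mem_compactlySupportedContinuous Finset.univ
        (fun i _ => hfi i) (fun i _ => hgi i)
    obtain ⟨n', F₂, G₂, hF₂, hG₂, hsum₂⟩ :=
      exists_fin_factorization_of_mem_compactlySupportedContinuous s
        (F := fun c x => (H : Set G).indicator 1 (x * c))
        (G := fun c y => f y * (H : Set G).indicator 1 (c⁻¹ * y))
        (fun c _ => comp_homeomorph_mem_compactlySupportedContinuous hind (.mulRight c))
        (fun c _ => ⟨hf.1.mul (hind.1.comp (continuous_const_mul c⁻¹)), hf.2.1.mul_right⟩)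
    exact ⟨⟨hf.1, hf.2.1.is_zero_at_infty⟩, m, n', _, _, F₁, G₁, F₂, G₂,
      ⟨hind.1, hind.2.is_zero_at_infty, hind₀⟩, ⟨hind.1, hind.2.is_zero_at_infty, hind₀⟩,
      hF₁, hG₁, hF₂, hG₂, fun x y => (hid₁ x y).trans (hsum₁ x y),
      fun x y => (hid₂ x y).trans (hsum₂ x y)⟩
  · rintro ⟨⟨hfc, -⟩, m, n, g, h, fi, gi, fj, gj, ⟨hgc, -, hg₀⟩, ⟨-, hh, hh₀⟩, -, -, hfj, -,
      hid₁, hid₂⟩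
    obtain ⟨H, hHc, hHo⟩ := hG
    have hfs : HasCompactSupport f := hasCompactSupport_of_mul_eq_sum hh hh₀
      (fun j => ZeroAtInftyContinuousMap.isBounded_range ⟨⟨fj j, (hfj j).1⟩, (hfj j).2.1⟩) hid₂
    exact mem_polyFun_of_finiteDimensional_span_translates hfc hfs hHc hHo
      (finiteDimensional_span_translates hgc hg₀ hid₁ hHc)

/-- Let `G` be a locally compact group with a compact open subgroup. Then `f ∈ P(G)` iff
`f ∈ C₀(G)` and there are nonzero `g, h ∈ C₀(G)` and finitely many nonzero functions
`fᵢ, gᵢ, f'ⱼ, g'ⱼ ∈ C₀(G)` such that `f(xy)·g(y) = ∑ᵢ fᵢ(x)·gᵢ(y)` and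
`f(y)·h(xy) = ∑ⱼ f'ⱼ(x)·g'ⱼ(y)` for all `x, y ∈ G`. -/
theorem mem_polyFun_iff_factorizations
    {G : Type*} [Group G] [TopologicalSpace G] [IsTopologicalGroup G]
    [LocallyCompactSpace G] [T2Space G]
    (hG : ∃ H : Subgroup G, IsCompact (H : Set G) ∧ IsOpen (H : Set G))
    (f : G → ℂ) :
    f ∈ PolyFun G ↔
      (Continuous f ∧ Tendsto f (cocompact G) (𝓝 0)) ∧
      ∃ (m n : ℕ) (g h : G → ℂ) (fi gi : Fin m → G → ℂ) (fj gj : Fin n → G → ℂ),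
        (Continuous g ∧ Tendsto g (cocompact G) (𝓝 0) ∧ g ≠ 0) ∧
        (Continuous h ∧ Tendsto h (cocompact G) (𝓝 0) ∧ h ≠ 0) ∧
        (∀ i, Continuous (fi i) ∧ Tendsto (fi i) (cocompact G) (𝓝 0) ∧ fi i ≠ 0) ∧
        (∀ i, Continuous (gi i) ∧ Tendsto (gi i) (cocompact G) (𝓝 0) ∧ gi i ≠ 0) ∧
        (∀ j, Continuous (fj j) ∧ Tendsto (fj j) (cocompact G) (𝓝 0) ∧ fj j ≠ 0) ∧
        (∀ j, Continuous (gj j) ∧ Tendsto (gj j) (cocompact G) (𝓝 0) ∧ gj j ≠ 0) ∧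
        (∀ x y : G, f (x * y) * g y = ∑ i, fi i x * gi i y) ∧
        (∀ x y : G, f y * h (x * y) = ∑ j, fj j x * gj j y) :=
  mem_polyFun_iff_factorizations_general hG f
end

section
/- Let G be a locally compact group. Call a function p : G → ℂ a group-like projection in C₀(G) if p ∈ C₀(G), p is nonzero, p(x) = conj(p(x)) and p(x)² = p(x) for all x, and p(xy)·p(x) = p(x)·p(y) = p(xy)·p(y) for all x, y ∈ G. Then G has a compact open subgroup if and only if C₀(G) contains a group-like projection; moreover, a function p is a group-like projection in C₀(G) if and only if p = χ_H, the indicator function of some compact open subgroup H of G. -/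
open Filter Topology

/-- A group-like projection in `C₀(G)`: a nonzero, self-adjoint, idempotent
`p ∈ C₀(G)` with `p(xy)·p(x) = p(x)·p(y) = p(xy)·p(y)` for all `x, y`. -/
def IsGroupLikeProjection {G : Type*} [Group G] [TopologicalSpace G] (p : G → ℂ) :
    Prop :=
  Continuous p ∧ Tendsto p (cocompact G) (𝓝 0) ∧ p ≠ 0 ∧
    (∀ x : G, (starRingEnd ℂ) (p x) = p x) ∧
    (∀ x : G, p x ^ 2 = p x) ∧
    (∀ x y : G, p (x * y) * p x = p x * p y) ∧
    (∀ x y : G, p (x * y) * p y = p x * p y)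

/-!
Idempotence forces a group-like projection `p` to take only the values `0` and `1`, and
`p(xy)p(x) = p(x)p(y)` makes `{p = 1}` closed under products and inverses. Continuity of `p`
makes this subgroup open, and vanishing at infinity makes it (being closed) compact.
Conversely, an open subgroup is also closed, so its indicator function is continuous.
-/

section IndicatorSubgroup

open scoped Classical

variable {G : Type*} [Group G] (H : Subgroup G)

lemma Subgroup.indicator_mul_mul_indicator_left (x y : G) :
    (if x * y ∈ H then (1 : ℂ) else 0) * (if x ∈ H then 1 else 0) =
      (if x ∈ H then 1 else 0) * (if y ∈ H then 1 else 0) := by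
  by_cases hx : x ∈ H
  · simp [hx, H.mul_mem_cancel_left hx]
  · simp [hx]

lemma Subgroup.indicator_mul_mul_indicator_right (x y : G) :
    (if x * y ∈ H then (1 : ℂ) else 0) * (if y ∈ H then 1 else 0) =
      (if x ∈ H then 1 else 0) * (if y ∈ H then 1 else 0) := by
  by_cases hy : y ∈ H
  · simp [hy, H.mul_mem_cancel_right hy]
  · simp [hy]

lemma isGroupLikeProjection_indicator_of_isCompact_of_isOpen [TopologicalSpace G]
    [SeparatelyContinuousMul G] (hc : IsCompact (H : Set G)) (ho : IsOpen (H : Set G)) :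
    IsGroupLikeProjection (fun x => if x ∈ H then (1 : ℂ) else 0) := by
  have hclopen : IsClopen (H : Set G) := ⟨H.isClosed_of_isOpen ho, ho⟩
  refine ⟨hclopen.continuous_indicator continuous_const, ?_, ?_, ?_, ?_,
    H.indicator_mul_mul_indicator_left, H.indicator_mul_mul_indicator_right⟩
  · refine tendsto_const_nhds.congr' ?_
    filter_upwards [hc.compl_mem_cocompact] with x hx
    simp [show x ∉ H from hx]
  · exact Function.ne_iff.2 ⟨1, by simp [H.one_mem]⟩
  · intro x; by_cases hx : x ∈ H <;> simp [hx]
  · intro x; by_cases hx : x ∈ H <;> simp [hx]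

end IndicatorSubgroup

namespace IsGroupLikeProjection

variable {G : Type*} [Group G] [TopologicalSpace G] {p : G → ℂ}

lemma eq_zero_or_eq_one (hp : IsGroupLikeProjection p) (x : G) : p x = 0 ∨ p x = 1 := by
  have h : p x * (p x - 1) = 0 := by linear_combination hp.2.2.2.2.1 x
  exact (mul_eq_zero.1 h).imp_right sub_eq_zero.1

lemma mul_eq_one (hp : IsGroupLikeProjection p) {x y : G} (hx : p x = 1) (hy : p y = 1) :
    p (x * y) = 1 := by
  simpa [hx, hy] using hp.2.2.2.2.2.1 x y

lemma inv_eq_one (hp : IsGroupLikeProjection p) {x : G} (hx : p x = 1) : p x⁻¹ = 1 := by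
  simpa [hp.mul_eq_one hx hx, hx] using (hp.2.2.2.2.2.1 (x * x) x⁻¹).symm

lemma one_eq_one (hp : IsGroupLikeProjection p) : p 1 = 1 := by
  obtain ⟨a, ha⟩ := Function.ne_iff.1 hp.2.2.1
  have ha : p a = 1 := (hp.eq_zero_or_eq_one a).resolve_left ha
  simpa using hp.mul_eq_one ha (hp.inv_eq_one ha)

def supportSubgroup (hp : IsGroupLikeProjection p) : Subgroup G where
  carrier := {x | p x = 1}
  one_mem' := hp.one_eq_one
  mul_mem' := hp.mul_eq_one
  inv_mem' := hp.inv_eq_one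

lemma mem_supportSubgroup_iff_ne_zero (hp : IsGroupLikeProjection p) {x : G} :
    x ∈ hp.supportSubgroup ↔ p x ≠ 0 :=
  ⟨fun hx => (hx : p x = 1) ▸ one_ne_zero, (hp.eq_zero_or_eq_one x).resolve_left⟩

lemma isOpen_supportSubgroup (hp : IsGroupLikeProjection p) :
    IsOpen (hp.supportSubgroup : Set G) := by
  have h : (hp.supportSubgroup : Set G) = {x | p x ≠ 0} :=
    Set.ext fun _ => hp.mem_supportSubgroup_iff_ne_zero
  exact h ▸ isOpen_ne_fun hp.1 continuous_const

lemma isCompact_supportSubgroup (hp : IsGroupLikeProjection p) :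
    IsCompact (hp.supportSubgroup : Set G) := by
  have hclosed : IsClosed (hp.supportSubgroup : Set G) := isClosed_eq hp.1 continuous_const
  have hcompl : (hp.supportSubgroup : Set G)ᶜ ∈ cocompact G :=
    hp.2.1.eventually (eventually_ne_nhds zero_ne_one)
  obtain ⟨K, hK, hsub⟩ := mem_cocompact'.1 hcompl
  exact hK.of_isClosed_subset hclosed (by simpa using hsub)

open scoped Classical in
lemma eq_indicator_supportSubgroup (hp : IsGroupLikeProjection p) :
    p = fun x => if x ∈ hp.supportSubgroup then (1 : ℂ) else 0 := by
  funext x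
  rcases hp.eq_zero_or_eq_one x with h | h <;>
    simp [h, hp.mem_supportSubgroup_iff_ne_zero]

end IsGroupLikeProjection

open scoped Classical in
theorem groupLikeProjection_iff_compact_open_subgroup_general
    {G : Type*} [Group G] [TopologicalSpace G] [IsTopologicalGroup G] :
    ((∃ H : Subgroup G, IsCompact (H : Set G) ∧ IsOpen (H : Set G)) ↔
      ∃ p : G → ℂ, IsGroupLikeProjection p) ∧
    (∀ p : G → ℂ, IsGroupLikeProjection p ↔
      ∃ H : Subgroup G, IsCompact (H : Set G) ∧ IsOpen (H : Set G) ∧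
        p = fun x => if x ∈ H then (1 : ℂ) else 0) := by
  have characterization : ∀ p : G → ℂ, IsGroupLikeProjection p ↔
      ∃ H : Subgroup G, IsCompact (H : Set G) ∧ IsOpen (H : Set G) ∧
        p = fun x => if x ∈ H then (1 : ℂ) else 0 := fun p =>
    ⟨fun hp => ⟨hp.supportSubgroup, hp.isCompact_supportSubgroup, hp.isOpen_supportSubgroup,
        hp.eq_indicator_supportSubgroup⟩,
      fun ⟨H, hc, ho, hp⟩ => hp ▸ isGroupLikeProjection_indicator_of_isCompact_of_isOpen H hc ho⟩
  refine ⟨⟨fun ⟨H, hc, ho⟩ => ⟨_, (characterization _).2 ⟨H, hc, ho, rfl⟩⟩, ?_⟩, characterization⟩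
  rintro ⟨p, hp⟩
  obtain ⟨H, hc, ho, -⟩ := (characterization p).1 hp
  exact ⟨H, hc, ho⟩

open scoped Classical in
/-- `G` has a compact open subgroup iff `C₀(G)` contains a group-like projection;
moreover the group-like projections in `C₀(G)` are exactly the indicator functions of
compact open subgroups. -/
theorem groupLikeProjection_iff_compact_open_subgroup
    {G : Type*} [Group G] [TopologicalSpace G] [IsTopologicalGroup G]
    [LocallyCompactSpace G] [T2Space G] :
    ((∃ H : Subgroup G, IsCompact (H : Set G) ∧ IsOpen (H : Set G)) ↔
      ∃ p : G → ℂ, IsGroupLikeProjection p) ∧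
    (∀ p : G → ℂ, IsGroupLikeProjection p ↔
      ∃ H : Subgroup G, IsCompact (H : Set G) ∧ IsOpen (H : Set G) ∧
        p = fun x => if x ∈ H then (1 : ℂ) else 0) :=
  groupLikeProjection_iff_compact_open_subgroup_general
end
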